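/- Let (X_i)_{i∈ℤ} be a strictly stationary square-integrable real sequence with |Cov(X_0,X_j)| ≤ c(1+|j|)^{−a} for all j ∈ ℤ, for some c > 0 and a > 2. For integers 1 ≤ q_n < p_n ≤ n with k_n = ⌊n/p_n⌋, define Y_− = p_n^{−1} Σ_{i=1}^{p_n−q_n} X_i and, for ℓ ≥ 1, Y_ℓ^{(n)} = p_n^{−1} Σ_{j=ℓ p_n + 1}^{(ℓ+1)p_n} X_j. Then there exists a constant C > 0, depending only on c and a, such that for all n: Σ_{ℓ=1}^{k_n} |Cov(Y_−, Y_ℓ^{(n)})| ≤ C / p_n. -/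

import Mathlib

open MeasureTheory ProbabilityTheory Filter Topology

noncomputable section

variable {Ω : Type*} [MeasurableSpace Ω]

/-- Covariance of two real-valued random variables. -/
def cov (P : Measure Ω) (f g : Ω → ℝ) : ℝ :=
  (∫ ω, f ω * g ω ∂P) - (∫ ω, f ω ∂P) * (∫ ω, g ω ∂P)

/-- Strict stationarity of a real-valued process indexed by `ℤ`: for every shift `k`, the
joint law of the shifted process coincides with that of the original process. -/
def IsStrictlyStationary (P : Measure Ω) (X : ℤ → Ω → ℝ) : Prop :=
  ∀ k : ℤ, Measure.map (fun ω => fun i : ℤ => X (i + k) ω) P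
    = Measure.map (fun ω => fun i : ℤ => X i ω) P

/-- The process `X` is α-mixing with coefficients `α`. -/
def IsAlphaMixingWith (P : Measure Ω) (X : ℤ → Ω → ℝ) (α : ℕ → ℝ) : Prop :=
  ∀ q : ℕ, 1 ≤ q → ∀ t : ℤ, ∀ A B : Set Ω,
    MeasurableSet[⨆ i ∈ {i : ℤ | i ≤ t}, MeasurableSpace.comap (X i) (borel ℝ)] A →
    MeasurableSet[⨆ i ∈ {i : ℤ | t + (q : ℤ) ≤ i}, MeasurableSpace.comap (X i) (borel ℝ)] B →
    |(P (A ∩ B)).toReal - (P A).toReal * (P B).toReal| ≤ α q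

/-- The process `X` is θ-weakly dependent with coefficients `θ`: for separated monotone blocks
of indices, any bounded measurable `f` of the past and any function `g` of the future that is
`L`-Lipschitz with respect to the ℓ¹-norm satisfy the covariance bound. -/
def IsThetaWeaklyDependentWith (P : Measure Ω) (X : ℤ → Ω → ℝ) (θ : ℕ → ℝ) : Prop :=
  ∀ (u v q : ℕ), 1 ≤ u → 1 ≤ v → 1 ≤ q →
    ∀ (i : Fin u → ℤ) (j : Fin v → ℤ), Monotone i → Monotone j →
    (∀ a b, i a + (q : ℤ) ≤ j b) →
    ∀ (f : (Fin u → ℝ) → ℝ) (g : (Fin v → ℝ) → ℝ) (Mf L : ℝ),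
      Measurable f → (∀ x, |f x| ≤ Mf) →
      (∀ x y, |g x - g y| ≤ L * ∑ a, |x a - y a|) →
      |cov P (fun ω => f fun a => X (i a) ω) (fun ω => g fun b => X (j b) ω)|
        ≤ (v : ℝ) * L * Mf * θ q

/-- The common mean `m = E[X₀]`. -/
def meanX (P : Measure Ω) (X : ℤ → Ω → ℝ) : ℝ := ∫ ω, X 0 ω ∂P

/-- The long-run variance `σ² = Σ_{j ∈ ℤ} Cov(X₀, X_j)`. -/
def sigma2 (P : Measure Ω) (X : ℤ → Ω → ℝ) : ℝ := ∑' j : ℤ, cov P (X 0) (X j)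

/-- Block mean `Y_i^{(n)}` over the Bernstein block `B_{i,n} = {(i-1)p+1, …, ip}`. -/
def blockY (X : ℤ → Ω → ℝ) (p i : ℕ) (ω : Ω) : ℝ :=
  (∑ j ∈ Finset.Icc ((i - 1) * p + 1) (i * p), X (j : ℤ) ω) / p

/-- Normalized centred block sum `G_{i,n} = √p (Y_i^{(n)} − m)`. -/
def blockG (P : Measure Ω) (X : ℤ → Ω → ℝ) (p i : ℕ) (ω : Ω) : ℝ :=
  Real.sqrt p * (blockY X p i ω - meanX P X)

/-- Centred squared block sum `U_{i,n} = G_{i,n}² − E[G_{i,n}²]`. -/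
def blockU (P : Measure Ω) (X : ℤ → Ω → ℝ) (p i : ℕ) (ω : Ω) : ℝ :=
  blockG P X p i ω ^ 2 - ∫ ω', blockG P X p i ω' ^ 2 ∂P

/-- The statistic `𝒢_n = (m²√k)⁻¹ Σ_{i=1}^{k} U_{i,n}`. -/
def calG (P : Measure Ω) (X : ℤ → Ω → ℝ) (p k : ℕ) (ω : Ω) : ℝ :=
  (∑ i ∈ Finset.Icc 1 k, blockU P X p i ω) / (meanX P X ^ 2 * Real.sqrt k)

/-- The fourth joint cumulant `κ(X_a, X_b, X_c, X_d)`. -/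
def cum4 (P : Measure Ω) (X : ℤ → Ω → ℝ) (a b c d : ℤ) : ℝ :=
  (∫ ω, (X a ω - meanX P X) * (X b ω - meanX P X) * (X c ω - meanX P X)
      * (X d ω - meanX P X) ∂P)
    - cov P (X a) (X b) * cov P (X c) (X d)
    - cov P (X a) (X c) * cov P (X b) (X d)
    - cov P (X a) (X d) * cov P (X b) (X c)

/-- Condition (C): summability of the fourth cumulants
`Σ_{i,j,k=1}^∞ |κ(X₀, X_i, X_j, X_k)| < ∞`. -/
def CondC (P : Measure Ω) (X : ℤ → Ω → ℝ) : Prop :=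
  Summable (fun v : ℕ × ℕ × ℕ =>
    |cum4 P X 0 ((v.1 : ℤ) + 1) ((v.2.1 : ℤ) + 1) ((v.2.2 : ℤ) + 1)|)

/-- Convergence in distribution: weak convergence of the laws of `Z n` under `P`
to the limit measure `μLim`. -/
def TendstoInDistribution (P : Measure Ω) (Z : ℕ → Ω → ℝ) (μLim : Measure ℝ) : Prop :=
  ∀ F : BoundedContinuousFunction ℝ ℝ,
    Tendsto (fun n => ∫ ω, F (Z n ω) ∂P) atTop (𝓝 (∫ x, F x ∂μLim))

/-- Mean over the first `p − q` observations of the initial block,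
`Y_− = p⁻¹ Σ_{i=1}^{p−q} X_i`. -/
def Yminus (X : ℤ → Ω → ℝ) (p q : ℕ) (ω : Ω) : ℝ :=
  (∑ i ∈ Finset.Icc 1 (p - q), X (i : ℤ) ω) / p

/-- The `ℓ`-th shifted block mean `Y_ℓ^{(n)} = p⁻¹ Σ_{j=ℓp+1}^{(ℓ+1)p} X_j`. -/
def Yshift (X : ℤ → Ω → ℝ) (p ℓ : ℕ) (ω : Ω) : ℝ :=
  (∑ j ∈ Finset.Icc (ℓ * p + 1) ((ℓ + 1) * p), X (j : ℤ) ω) / p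

/-!
By stationarity `Cov(X_i, X_j)` depends only on the lag `j - i`, so it is bounded by
`F (j - i)` with `F d = c (1 + d)^(-a)`, which is summable since `a > 1`. Expanding by
bilinearity, `Cov(Y_-, Y_ℓ) = p⁻² Σ_i Σ_{j ∈ B_ℓ} Cov(X_i, X_j)`. For a fixed `i ≤ p` the blocks
`B_ℓ`, `ℓ ≥ 1`, are disjoint and lie to the right of `i`, so the lags `j - i` are distinct and
the sum over all `ℓ` and `j` is at most `Σ_d F d`. Summing over the `p - q ≤ p` indices `i`
gives the bound `p⁻¹ Σ_d F d`.
-/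

open Finset

namespace IsStrictlyStationary

variable {P : Measure Ω} {X : ℤ → Ω → ℝ}

lemma identDistrib_shift (hstat : IsStrictlyStationary P X) (hXmeas : ∀ i, Measurable (X i))
    (k : ℤ) : IdentDistrib (fun ω i => X (i + k) ω) (fun ω i => X i ω) P P :=
  ⟨(measurable_pi_lambda _ fun _ => hXmeas _).aemeasurable,
    (measurable_pi_lambda _ hXmeas).aemeasurable, hstat k⟩

lemma memLp (hstat : IsStrictlyStationary P X) (hXmeas : ∀ i, Measurable (X i))
    {r : ENNReal} (h0 : MemLp (X 0) r P) (i : ℤ) : MemLp (X i) r P := by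
  simpa [Function.comp_def] using
    ((hstat.identDistrib_shift hXmeas i).comp (measurable_pi_apply 0)).symm.memLp_snd h0

lemma cov_eq (hstat : IsStrictlyStationary P X) (hXmeas : ∀ i, Measurable (X i)) (i j : ℤ) :
    cov P (X i) (X j) = cov P (X 0) (X (j - i)) := by
  have h := hstat.identDistrib_shift hXmeas i
  have hprod := (h.comp ((measurable_pi_apply 0).mul (measurable_pi_apply (j - i)))).integral_eq
  have hfst := (h.comp (measurable_pi_apply 0)).integral_eq
  have hsnd := (h.comp (measurable_pi_apply (j - i))).integral_eq
  simp only [Function.comp_def, Pi.mul_apply, zero_add, sub_add_cancel] at hprod hfst hsnd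
  simp only [cov, hprod, hfst, hsnd]

end IsStrictlyStationary

lemma cov_eq_covariance {P : Measure Ω} [IsProbabilityMeasure P] {f g : Ω → ℝ}
    (hf : MemLp f 2 P) (hg : MemLp g 2 P) : cov P f g = cov[f, g; P] :=
  (covariance_eq_sub hf hg).symm

lemma cov_sum_div_sum_div {P : Measure Ω} [IsProbabilityMeasure P] {ι κ : Type*}
    {s : Finset ι} {t : Finset κ} {f : ι → Ω → ℝ} {g : κ → Ω → ℝ}
    (hf : ∀ i ∈ s, MemLp (f i) 2 P) (hg : ∀ j ∈ t, MemLp (g j) 2 P) (r r' : ℝ) :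
    cov P (fun ω => (∑ i ∈ s, f i ω) / r) (fun ω => (∑ j ∈ t, g j ω) / r')
      = (∑ i ∈ s, ∑ j ∈ t, cov P (f i) (g j)) / (r * r') := by
  simp only [div_eq_mul_inv]
  rw [cov_eq_covariance ((memLp_finsetSum s hf).mul_const _) ((memLp_finsetSum t hg).mul_const _),
    covariance_mul_const_left, covariance_mul_const_right, covariance_fun_sum_fun_sum' hf hg,
    mul_assoc, ← mul_inv_rev]
  congr 1
  exact sum_congr rfl fun i hi => sum_congr rfl fun j hj =>
    (cov_eq_covariance (hf i hi) (hg j hj)).symm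

lemma Finset.sum_Icc_sum_Ioc_mul {M : Type*} [AddCommMonoid M] (f : ℕ → M) (p k : ℕ) :
    ∑ ℓ ∈ Icc 1 k, ∑ j ∈ Ioc (ℓ * p) ((ℓ + 1) * p), f j
      = ∑ j ∈ Ioc p ((k + 1) * p), f j := by
  induction k with
  | zero => simp
  | succ k ih =>
    rw [sum_Icc_succ_top (by omega), ih,
      sum_Ioc_consecutive _ (by nlinarith) (Nat.mul_le_mul_right p (by omega))]

lemma sum_Ioc_sub_le_tsum {F : ℕ → ℝ} (hF0 : ∀ d, 0 ≤ F d) (hF : Summable F) {i m : ℕ}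
    (hi : i ≤ m) (n : ℕ) : ∑ j ∈ Ioc m n, F (j - i) ≤ ∑' d, F d := by
  rw [← sum_image (g := fun j => j - i) (fun x hx y hy h => by
    simp only [coe_Ioc, Set.mem_Ioc] at hx hy h; omega)]
  exact hF.sum_le_tsum _ fun d _ => hF0 d

lemma summable_one_add_nat_rpow_neg {a : ℝ} (ha : 1 < a) :
    Summable fun d : ℕ => (1 + (d : ℝ)) ^ (-a) := by
  have h := (summable_nat_add_iff 1).mpr (Real.summable_nat_rpow.mpr (by linarith : -a < -1))
  simpa [add_comm] using h

section Blocks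

variable {P : Measure Ω} [IsProbabilityMeasure P] {X : ℤ → Ω → ℝ} {F : ℕ → ℝ}

lemma abs_cov_Yminus_Yshift_le (hL2 : ∀ i, MemLp (X i) 2 P)
    (hlag : ∀ i j : ℕ, i ≤ j → |cov P (X i) (X j)| ≤ F (j - i)) (p q : ℕ) {ℓ : ℕ} (hℓ : 1 ≤ ℓ) :
    |cov P (Yminus X p q) (Yshift X p ℓ)|
      ≤ (∑ i ∈ Icc 1 (p - q), ∑ j ∈ Ioc (ℓ * p) ((ℓ + 1) * p), F (j - i)) / p ^ 2 := by
  have hp : p ≤ ℓ * p := Nat.le_mul_of_pos_left p hℓ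
  unfold Yminus Yshift
  rw [cov_sum_div_sum_div (f := fun i : ℕ => X i) (g := fun j : ℕ => X j) (fun i _ => hL2 i)
      (fun j _ => hL2 j), abs_div, ← sq, abs_sq, Icc_add_one_left_eq_Ioc]
  gcongr
  refine (abs_sum_le_sum_abs _ _).trans (sum_le_sum fun i hi => ?_)
  refine (abs_sum_le_sum_abs _ _).trans (sum_le_sum fun j hj => ?_)
  rw [mem_Icc] at hi
  rw [mem_Ioc] at hj
  exact hlag i j (by omega)

lemma sum_abs_cov_Yminus_Yshift_le (hL2 : ∀ i, MemLp (X i) 2 P) (hF0 : ∀ d, 0 ≤ F d)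
    (hF : Summable F) (hlag : ∀ i j : ℕ, i ≤ j → |cov P (X i) (X j)| ≤ F (j - i)) (p q k : ℕ) :
    ∑ ℓ ∈ Icc 1 k, |cov P (Yminus X p q) (Yshift X p ℓ)|
      ≤ (p - q : ℕ) * (∑' d, F d) / p ^ 2 := calc
  _ ≤ ∑ ℓ ∈ Icc 1 k, (∑ i ∈ Icc 1 (p - q),
        ∑ j ∈ Ioc (ℓ * p) ((ℓ + 1) * p), F (j - i)) / p ^ 2 :=
    sum_le_sum fun ℓ hℓ => abs_cov_Yminus_Yshift_le hL2 hlag p q (mem_Icc.1 hℓ).1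
  _ = (∑ i ∈ Icc 1 (p - q), ∑ j ∈ Ioc p ((k + 1) * p), F (j - i)) / p ^ 2 := by
    simp only [← sum_div, sum_comm (s := Icc 1 k), sum_Icc_sum_Ioc_mul]
  _ ≤ (∑ _i ∈ Icc 1 (p - q), ∑' d, F d) / p ^ 2 := by
    gcongr with i hi
    exact sum_Ioc_sub_le_tsum hF0 hF (by rw [mem_Icc] at hi; omega) _
  _ = (p - q : ℕ) * (∑' d, F d) / p ^ 2 := by
    rw [sum_const, Nat.card_Icc, nsmul_eq_mul, Nat.add_sub_cancel]

end Blocks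

/-- summed covariance bound between `Y_−` and the shifted block means. -/
theorem stmt12
    (P : Measure Ω) [IsProbabilityMeasure P]
    (X : ℤ → Ω → ℝ) (hXmeas : ∀ i, Measurable (X i))
    (hstat : IsStrictlyStationary P X)
    (hL2 : MemLp (X 0) 2 P)
    (c a : ℝ) (hc : 0 < c) (ha : 2 < a)
    (hcov : ∀ j : ℤ, |cov P (X 0) (X j)| ≤ c * (1 + |(j : ℝ)|) ^ (-a))
    (p q : ℕ → ℕ)
    (hpq : ∀ n, 1 ≤ n → 1 ≤ q n ∧ q n < p n ∧ p n ≤ n) :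
    ∃ C : ℝ, 0 < C ∧ ∀ n : ℕ, 1 ≤ n →
      ∑ ℓ ∈ Finset.Icc 1 (n / p n),
          |cov P (Yminus X (p n) (q n)) (Yshift X (p n) ℓ)|
        ≤ C / p n := by
  set F : ℕ → ℝ := fun d => c * (1 + d) ^ (-a)
  have hF0 : ∀ d, 0 ≤ F d := fun d => by positivity
  have hF : Summable F := (summable_one_add_nat_rpow_neg (by linarith)).mul_left c
  have hlag : ∀ i j : ℕ, i ≤ j → |cov P (X i) (X j)| ≤ F (j - i) := fun i j hij => by
    rw [hstat.cov_eq hXmeas]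
    convert hcov (j - i) using 4
    push_cast [Nat.cast_sub hij]
    exact (abs_of_nonneg (sub_nonneg.2 (Nat.cast_le.2 hij))).symm
  refine ⟨∑' d, F d + 1, by linarith [(tsum_nonneg hF0 : 0 ≤ ∑' d, F d)], fun n hn => ?_⟩
  obtain ⟨hq, hqp, -⟩ := hpq n hn
  have hp : (0 : ℝ) < p n := by exact_mod_cast (by omega : 0 < p n)
  calc _ ≤ (p n - q n : ℕ) * (∑' d, F d) / p n ^ 2 :=
        sum_abs_cov_Yminus_Yshift_le (hstat.memLp hXmeas hL2) hF0 hF hlag _ _ _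
    _ ≤ p n * (∑' d, F d + 1) / p n ^ 2 := by
        gcongr
        · omega
        · linarith
    _ = (∑' d, F d + 1) / p n := by field_simp
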